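/- Let A be a symmetric positive definite n×n real matrix and B an m×n real matrix. Suppose there is β > 0 such that for every q in the orthogonal complement of ker(B^T), sup_{w ≠ 0} ⟨q, Bw⟩²/⟨w, Aw⟩ ≥ β² ⟨q, Zq⟩, where Z is a symmetric positive definite m×m matrix. If (u, p) solves Au + B^T p = f, Bu = g, with g in the range of B, then ‖u‖_A ≤ ‖f‖_{A⁻¹} + (1/β)‖g‖_{Z⁻¹}, where ‖v‖_A = ⟨v,Av⟩^{1/2}, ‖f‖_{A⁻¹} = ⟨f, A⁻¹f⟩^{1/2}, and ‖g‖_{Z⁻¹} = ⟨g, Z⁻¹g⟩^{1/2}. -/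

import Mathlib

/-!
Put `S = B A⁻¹ Bᵀ`. The kernel of `S B` is `ker B`, so `S` maps `range B` onto itself and
`g = S q` for some `q ∈ range B`; in particular `q ⊥ ker Bᵀ`. Split `u = u₀ + u₁` with
`u₁ = A⁻¹ Bᵀ q`. Then `B u₁ = g`, so `(u₀, p + q)` solves the saddle point problem with data
`(f, 0)`, and testing it with `u₀` gives `‖u₀‖_A² = ⟨u₀, f⟩ ≤ ‖u₀‖_A ‖f‖_{A⁻¹}`. On the other hand
`‖u₁‖_A² = ⟨q, g⟩ ≤ ‖q‖_Z ‖g‖_{Z⁻¹}`, while the inf-sup condition gives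
`β ‖q‖_Z ≤ ‖Bᵀ q‖_{A⁻¹} = ‖u₁‖_A`, because `⟨Bᵀ q, w⟩² ≤ ‖w‖_A² ‖Bᵀ q‖_{A⁻¹}²` by Cauchy–Schwarz.
The triangle inequality for `‖·‖_A` concludes.
-/

open Matrix

lemma Real.sqrt_le_of_le_sqrt_mul {a c : ℝ} (hc : 0 ≤ c) (h : a ≤ √a * c) : √a ≤ c := by
  rcases (Real.sqrt_nonneg a).eq_or_lt' with ha | ha
  · exact ha ▸ hc
  · refine le_of_mul_le_mul_left ?_ ha
    rwa [Real.mul_self_sqrt (Real.sqrt_pos.1 ha).le]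

lemma LinearMap.range_eq_of_le_of_ker_eq {K V W : Type*} [Field K] [AddCommGroup V] [Module K V]
    [AddCommGroup W] [Module K W] [FiniteDimensional K V] [FiniteDimensional K W]
    {f g : V →ₗ[K] W} (hle : range f ≤ range g) (hker : ker f = ker g) : range f = range g := by
  refine Submodule.eq_of_le_of_finrank_eq hle ?_
  have hf := f.finrank_range_add_finrank_ker
  have hg := g.finrank_range_add_finrank_ker
  rw [hker] at hf
  omega

namespace Matrix

variable {m n : Type*} [Fintype m] [Fintype n]

/-- The paper's `‖x‖_M`; it is a norm only for positive definite `M`. -/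
noncomputable def energyNorm (M : Matrix n n ℝ) (x : n → ℝ) : ℝ := √(x ⬝ᵥ M *ᵥ x)

lemma energyNorm_le_of_le_mul {M : Matrix n n ℝ} {x : n → ℝ} {c : ℝ} (hc : 0 ≤ c)
    (h : x ⬝ᵥ M *ᵥ x ≤ energyNorm M x * c) : energyNorm M x ≤ c :=
  Real.sqrt_le_of_le_sqrt_mul hc h

lemma energyNorm_nonneg (M : Matrix n n ℝ) (x : n → ℝ) : 0 ≤ energyNorm M x :=
  Real.sqrt_nonneg _

lemma IsHermitian.dotProduct_mulVec_comm {M : Matrix n n ℝ} (hM : M.IsHermitian) (x y : n → ℝ) :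
    y ⬝ᵥ M *ᵥ x = x ⬝ᵥ M *ᵥ y := by
  rw [← dotProduct_transpose_mulVec, ← conjTranspose_eq_transpose_of_trivial, hM.eq]

namespace PosSemidef

variable {M : Matrix n n ℝ}

lemma sq_dotProduct_mulVec_le (hM : M.PosSemidef) (x y : n → ℝ) :
    (x ⬝ᵥ M *ᵥ y) ^ 2 ≤ (x ⬝ᵥ M *ᵥ x) * (y ⬝ᵥ M *ᵥ y) := by
  have hsymm := hM.isHermitian.dotProduct_mulVec_comm x y
  have hdisc : discrim (x ⬝ᵥ M *ᵥ x) (2 * (x ⬝ᵥ M *ᵥ y)) (y ⬝ᵥ M *ᵥ y) ≤ 0 := by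
    refine discrim_le_zero fun t => ?_
    have h := hM.dotProduct_mulVec_nonneg (t • x + y)
    simp only [star_trivial, mulVec_add, mulVec_smul, dotProduct_add, add_dotProduct,
      dotProduct_smul, smul_dotProduct, smul_eq_mul, hsymm] at h
    linarith
  rw [discrim] at hdisc
  linarith

lemma dotProduct_mulVec_le_energyNorm_mul (hM : M.PosSemidef) (x y : n → ℝ) :
    x ⬝ᵥ M *ᵥ y ≤ energyNorm M x * energyNorm M y := by
  rw [energyNorm, energyNorm, ← Real.sqrt_mul (by simpa using hM.dotProduct_mulVec_nonneg x)]
  exact Real.le_sqrt_of_sq_le (hM.sq_dotProduct_mulVec_le x y)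

lemma energyNorm_add_le (hM : M.PosSemidef) (x y : n → ℝ) :
    energyNorm M (x + y) ≤ energyNorm M x + energyNorm M y := by
  have hsymm := hM.isHermitian.dotProduct_mulVec_comm x y
  have hx : x ⬝ᵥ M *ᵥ x = energyNorm M x ^ 2 :=
    (Real.sq_sqrt (by simpa using hM.dotProduct_mulVec_nonneg x)).symm
  have hy : y ⬝ᵥ M *ᵥ y = energyNorm M y ^ 2 :=
    (Real.sq_sqrt (by simpa using hM.dotProduct_mulVec_nonneg y)).symm
  have hxy := hM.dotProduct_mulVec_le_energyNorm_mul x y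
  rw [energyNorm, Real.sqrt_le_left (add_nonneg (energyNorm_nonneg _ _) (energyNorm_nonneg _ _))]
  simp only [mulVec_add, dotProduct_add, add_dotProduct, hsymm, hx, hy]
  nlinarith

end PosSemidef

lemma PosDef.ker_mulVecLin_mul_mul_transpose {P : Matrix n n ℝ} (hP : P.PosDef)
    (B : Matrix m n ℝ) : LinearMap.ker (B * P * Bᵀ).mulVecLin = LinearMap.ker Bᵀ.mulVecLin := by
  ext x
  simp only [LinearMap.mem_ker, mulVecLin_apply]
  refine ⟨fun h => ?_, fun h => by rw [← mulVec_mulVec, h, mulVec_zero]⟩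
  by_contra hx
  have hpos := hP.dotProduct_mulVec_pos hx
  rw [star_trivial, dotProduct_comm, dotProduct_transpose_mulVec, mulVec_mulVec, mulVec_mulVec,
    h, dotProduct_zero] at hpos
  exact lt_irrefl 0 hpos

lemma PosDef.range_mulVecLin_mul_mul_transpose_mul {P : Matrix n n ℝ} (hP : P.PosDef)
    (B : Matrix m n ℝ) :
    LinearMap.range (B * P * Bᵀ * B).mulVecLin = LinearMap.range B.mulVecLin := by
  refine LinearMap.range_eq_of_le_of_ker_eq ?_ ?_
  · rw [Matrix.mul_assoc, Matrix.mul_assoc, mulVecLin_mul]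
    exact LinearMap.range_comp_le_range _ _
  · rw [mulVecLin_mul, LinearMap.ker_comp, hP.ker_mulVecLin_mul_mul_transpose, ← LinearMap.ker_comp,
      ← mulVecLin_mul, ker_mulVecLin_transpose_mul_self]

lemma PosDef.exists_mul_mul_transpose_mulVec_mulVec_eq {P : Matrix n n ℝ} (hP : P.PosDef)
    (B : Matrix m n ℝ) {g : m → ℝ} (hg : ∃ w, g = B *ᵥ w) :
    ∃ v, (B * P * Bᵀ) *ᵥ (B *ᵥ v) = g := by
  obtain ⟨w, rfl⟩ := hg
  obtain ⟨v, hv⟩ : B *ᵥ w ∈ LinearMap.range (B * P * Bᵀ * B).mulVecLin := by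
    rw [hP.range_mulVecLin_mul_mul_transpose_mul]
    exact ⟨w, rfl⟩
  exact ⟨v, by rwa [mulVec_mulVec]⟩

variable [DecidableEq n] {M : Matrix n n ℝ}

lemma PosDef.mulVec_inv_mulVec (hM : M.PosDef) (x : n → ℝ) : M *ᵥ (M⁻¹ *ᵥ x) = x := by
  rw [mulVec_mulVec, mul_nonsing_inv _ ((isUnit_iff_isUnit_det M).1 hM.isUnit), one_mulVec]

lemma PosDef.sq_dotProduct_le (hM : M.PosDef) (x f : n → ℝ) :
    (x ⬝ᵥ f) ^ 2 ≤ (x ⬝ᵥ M *ᵥ x) * (f ⬝ᵥ M⁻¹ *ᵥ f) := by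
  have h := hM.posSemidef.sq_dotProduct_mulVec_le x (M⁻¹ *ᵥ f)
  rwa [hM.mulVec_inv_mulVec, dotProduct_comm (M⁻¹ *ᵥ f)] at h

lemma PosDef.dotProduct_le_energyNorm_mul_energyNorm_inv (hM : M.PosDef) (x f : n → ℝ) :
    x ⬝ᵥ f ≤ energyNorm M x * energyNorm M⁻¹ f := by
  have hx : 0 ≤ x ⬝ᵥ M *ᵥ x := by simpa using hM.posSemidef.dotProduct_mulVec_nonneg x
  rw [energyNorm, energyNorm, ← Real.sqrt_mul hx]
  exact Real.le_sqrt_of_sq_le (hM.sq_dotProduct_le x f)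

variable {A : Matrix n n ℝ} {B : Matrix m n ℝ}

lemma PosDef.energyNorm_le_of_mulVec_eq_zero (hA : A.PosDef) {u f : n → ℝ} {p : m → ℝ}
    (h₁ : A *ᵥ u + Bᵀ *ᵥ p = f) (h₂ : B *ᵥ u = 0) : energyNorm A u ≤ energyNorm A⁻¹ f := by
  refine energyNorm_le_of_le_mul (energyNorm_nonneg _ _) ?_
  calc u ⬝ᵥ A *ᵥ u = u ⬝ᵥ f := by
        rw [← h₁, dotProduct_add, dotProduct_transpose_mulVec, h₂, dotProduct_zero, add_zero]
    _ ≤ energyNorm A u * energyNorm A⁻¹ f := hA.dotProduct_le_energyNorm_mul_energyNorm_inv u f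

lemma PosDef.sSup_sq_dotProduct_mulVec_div_le (hA : A.PosDef) (B : Matrix m n ℝ) (q : m → ℝ) :
    sSup {r : ℝ | ∃ w : n → ℝ, w ≠ 0 ∧ r = (q ⬝ᵥ (B *ᵥ w)) ^ 2 / (w ⬝ᵥ (A *ᵥ w))} ≤
      (Bᵀ *ᵥ q) ⬝ᵥ A⁻¹ *ᵥ (Bᵀ *ᵥ q) := by
  refine Real.sSup_le ?_ (by simpa using hA.inv.posSemidef.dotProduct_mulVec_nonneg (Bᵀ *ᵥ q))
  rintro r ⟨w, hw, rfl⟩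
  rw [div_le_iff₀ (by simpa using hA.dotProduct_mulVec_pos hw), ← dotProduct_transpose_mulVec,
    mul_comm]
  exact hA.sq_dotProduct_le w (Bᵀ *ᵥ q)

lemma PosDef.energyNorm_le_of_infSup [DecidableEq m] (hA : A.PosDef) {Z : Matrix m m ℝ}
    (hZ : Z.PosDef) {β : ℝ} (hβ : 0 < β) {q g : m → ℝ}
    (hq : β ^ 2 * (q ⬝ᵥ (Z *ᵥ q)) ≤
      sSup {r : ℝ | ∃ w : n → ℝ, w ≠ 0 ∧ r = (q ⬝ᵥ (B *ᵥ w)) ^ 2 / (w ⬝ᵥ (A *ᵥ w))})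
    (hg : B *ᵥ (A⁻¹ *ᵥ Bᵀ *ᵥ q) = g) :
    energyNorm A (A⁻¹ *ᵥ Bᵀ *ᵥ q) ≤ 1 / β * energyNorm Z⁻¹ g := by
  set u := A⁻¹ *ᵥ Bᵀ *ᵥ q
  have hβq : β * energyNorm Z q ≤ energyNorm A u := by
    have hsup : u ⬝ᵥ A *ᵥ u = (Bᵀ *ᵥ q) ⬝ᵥ A⁻¹ *ᵥ (Bᵀ *ᵥ q) := by
      rw [hA.mulVec_inv_mulVec, dotProduct_comm]
    rw [energyNorm, ← Real.sqrt_sq hβ.le, ← Real.sqrt_mul (sq_nonneg β)]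
    exact Real.sqrt_le_sqrt (hsup ▸ hq.trans (hA.sSup_sq_dotProduct_mulVec_div_le B q))
  refine energyNorm_le_of_le_mul (mul_nonneg (by positivity) (energyNorm_nonneg _ _)) ?_
  calc u ⬝ᵥ A *ᵥ u = q ⬝ᵥ g := by rw [hA.mulVec_inv_mulVec, dotProduct_transpose_mulVec, hg]
    _ ≤ energyNorm Z q * energyNorm Z⁻¹ g := hZ.dotProduct_le_energyNorm_mul_energyNorm_inv q g
    _ ≤ energyNorm A u / β * energyNorm Z⁻¹ g := by
        gcongr
        · exact energyNorm_nonneg _ _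
        · rwa [le_div_iff₀ hβ, mul_comm]
    _ = energyNorm A u * (1 / β * energyNorm Z⁻¹ g) := by ring

end Matrix

/-- Lemma 5.5 of the paper: stability estimate for the velocity component of
the saddle point problem `Au + Bᵀp = f`, `Bu = g` in terms of the inf-sup
constant `β`: `‖u‖_A ≤ ‖f‖_{A⁻¹} + (1/β)‖g‖_{Z⁻¹}`. -/
theorem stmt_7 (n m : ℕ) (A : Matrix (Fin n) (Fin n) ℝ)
    (B : Matrix (Fin m) (Fin n) ℝ) (Z : Matrix (Fin m) (Fin m) ℝ)
    (hA : A.PosDef) (hZ : Z.PosDef) (β : ℝ) (hβ : 0 < β)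
    (hinfsup : ∀ q : Fin m → ℝ,
      (∀ q' : Fin m → ℝ, Bᵀ *ᵥ q' = 0 → q ⬝ᵥ q' = 0) →
      β ^ 2 * (q ⬝ᵥ (Z *ᵥ q)) ≤
        sSup {r : ℝ | ∃ w : Fin n → ℝ, w ≠ 0 ∧
          r = (q ⬝ᵥ (B *ᵥ w)) ^ 2 / (w ⬝ᵥ (A *ᵥ w))})
    (u : Fin n → ℝ) (p : Fin m → ℝ) (f : Fin n → ℝ) (g : Fin m → ℝ)
    (heq1 : A *ᵥ u + Bᵀ *ᵥ p = f) (heq2 : B *ᵥ u = g)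
    (hg : ∃ w, g = B *ᵥ w) :
    Real.sqrt (u ⬝ᵥ (A *ᵥ u)) ≤
      Real.sqrt (f ⬝ᵥ (A⁻¹ *ᵥ f)) + (1 / β) * Real.sqrt (g ⬝ᵥ (Z⁻¹ *ᵥ g)) := by
  obtain ⟨v, hv⟩ := hA.inv.exists_mul_mul_transpose_mulVec_mulVec_eq B hg
  set q := B *ᵥ v
  set u₁ := A⁻¹ *ᵥ Bᵀ *ᵥ q
  have hq : ∀ q' : Fin m → ℝ, Bᵀ *ᵥ q' = 0 → q ⬝ᵥ q' = 0 := fun q' hq' => by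
    rw [dotProduct_comm, ← dotProduct_transpose_mulVec, hq', dotProduct_zero]
  have hBu₁ : B *ᵥ u₁ = g := by rwa [mulVec_mulVec, mulVec_mulVec]
  have hker : energyNorm A (u - u₁) ≤ energyNorm A⁻¹ f :=
    hA.energyNorm_le_of_mulVec_eq_zero (p := p + q)
      (by rw [mulVec_sub, hA.mulVec_inv_mulVec, mulVec_add, ← heq1]; abel)
      (by rw [mulVec_sub, heq2, hBu₁, sub_self])
  have hrange : energyNorm A u₁ ≤ 1 / β * energyNorm Z⁻¹ g :=
    hA.energyNorm_le_of_infSup hZ hβ (hinfsup q hq) hBu₁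
  calc energyNorm A u = energyNorm A ((u - u₁) + u₁) := by rw [sub_add_cancel]
    _ ≤ energyNorm A (u - u₁) + energyNorm A u₁ := hA.posSemidef.energyNorm_add_le _ _
    _ ≤ _ := add_le_add hker hrange
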